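/- There exist constants c₀ > 0 and C > 0 such that for all positive reals x, y, z with min{x, y} > c₀ and x + y ≤ z, one has |F₁(x, y, z) − (z − x − y) − 2·log 2| ≤ C·(e^{−(z−x−y)} + e^{−2·min{x,y}}). -/

import Mathlib

open Real

/-- Inverse hyperbolic cosine: `Arccosh w = log (w + √(w² − 1))` for `w ≥ 1`. -/
noncomputable def arccosh (w : ℝ) : ℝ := Real.log (w + Real.sqrt (w ^ 2 - 1))

/-- The function `F₁(x,y,z) = Arccosh((cosh z + cosh x · cosh y)/(sinh x · sinh y))`. -/
noncomputable def F₁ (x y z : ℝ) : ℝ :=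
  arccosh ((Real.cosh z + Real.cosh x * Real.cosh y) / (Real.sinh x * Real.sinh y))

/-!
Factoring `e^{x+y}` out of numerator and denominator, the argument `W` of `Arccosh` in `F₁ x y z`
is `(2E + 2e^{-(x+y+z)} + (1+a)(1+b)) / ((1-a)(1-b))` with `E = e^{z-x-y}`, `a = e^{-2x}`,
`b = e^{-2y}`. Hence `2E + 1 ≤ W ≤ 2E + O(1 + E e^{-2 min x y})`. On the other hand
`log (4E) ≤ Arccosh W ≤ log (2W)` as soon as `W ≥ 2E + 1`, and `log (4E) = z - x - y + 2 log 2`;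
the upper bound `2W ≤ 4E (1 + O(e^{-(z-x-y)} + e^{-2 min x y}))` then gives the error term
through `log (1 + t) ≤ t`.
-/

lemma arccosh_le_log_two_mul {w : ℝ} (hw : 1 ≤ w) : arccosh w ≤ log (2 * w) := by
  have hsqrt : √(w ^ 2 - 1) ≤ w := Real.sqrt_le_iff.2 ⟨by linarith, by linarith⟩
  exact log_le_log (by positivity) (by linarith)

lemma log_four_mul_le_arccosh {a w : ℝ} (ha : 0 < a) (hw : 2 * a + 1 ≤ w) :
    log (4 * a) ≤ arccosh w := by
  have hsqrt : 2 * a ≤ √(w ^ 2 - 1) := Real.le_sqrt_of_sq_le (by nlinarith)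
  exact log_le_log (by positivity) (by linarith)

lemma log_le_log_add_of_le_mul_one_add {a b ε : ℝ} (ha : 0 < a) (hb : 0 < b)
    (h : b ≤ a * (1 + ε)) : log b ≤ log a + ε := by
  have hdiv : b / a ≤ 1 + ε := (div_le_iff₀' ha).2 h
  have := log_le_sub_one_of_pos (div_pos hb ha)
  rw [log_div hb.ne' ha.ne'] at this
  linarith

lemma cosh_add_cosh_mul_cosh_div_sinh_mul_sinh (x y z : ℝ) :
    (cosh z + cosh x * cosh y) / (sinh x * sinh y) =
      (2 * exp (z - x - y) + 2 * exp (-(z + x + y)) + (1 + exp (-2 * x)) * (1 + exp (-2 * y))) /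
        ((1 - exp (-2 * x)) * (1 - exp (-2 * y))) := by
  have hnum : 4 * (cosh z + cosh x * cosh y) = exp (x + y) *
      (2 * exp (z - x - y) + 2 * exp (-(z + x + y)) + (1 + exp (-2 * x)) * (1 + exp (-2 * y))) := by
    rw [show z - x - y = z + -x + -y by ring, show -(z + x + y) = -z + -x + -y by ring,
      show -2 * x = -x + -x by ring, show -2 * y = -y + -y by ring]
    simp only [cosh_eq, exp_add, exp_neg]; field_simp; ring
  have hden : 4 * (sinh x * sinh y) = exp (x + y) * ((1 - exp (-2 * x)) * (1 - exp (-2 * y))) := by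
    rw [show -2 * x = -x + -x by ring, show -2 * y = -y + -y by ring]
    simp only [sinh_eq, exp_add, exp_neg]; field_simp; ring
  rw [← mul_div_mul_left _ _ (four_ne_zero' ℝ), hnum, hden, mul_div_mul_left _ _ (exp_pos _).ne']

lemma two_mul_add_one_le_div {E r a b : ℝ} (hE : 0 ≤ E) (hr : 0 ≤ r) (ha : 0 ≤ a) (ha1 : a < 1)
    (hb : 0 ≤ b) (hb1 : b < 1) :
    2 * E + 1 ≤ (2 * E + 2 * r + (1 + a) * (1 + b)) / ((1 - a) * (1 - b)) := by
  have hden : 0 < (1 - a) * (1 - b) := mul_pos (by linarith) (by linarith)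
  rw [le_div_iff₀ hden]
  nlinarith [mul_nonneg ha hb, mul_nonneg hE (mul_nonneg ha hb), mul_nonneg hE ha, mul_nonneg hE hb]

lemma div_le_two_mul_add_of_le {E q r a b : ℝ} (hE : 0 ≤ E) (hr : r ≤ q) (ha : 0 ≤ a) (haq : a ≤ q)
    (hb : 0 ≤ b) (hbq : b ≤ q) (hq : q ≤ 1 / 3) :
    (2 * E + 2 * r + (1 + a) * (1 + b)) / ((1 - a) * (1 - b)) ≤ 2 * E + 12 + 12 * E * q := by
  have hden : 1 - 2 * q ≤ (1 - a) * (1 - b) := by nlinarith [mul_nonneg ha hb]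
  have hnum : 2 * E + 2 * r + (1 + a) * (1 + b) ≤ 2 * E + 1 + 5 * q := by
    nlinarith [mul_le_mul haq hbq hb (ha.trans haq)]
  have hbound : 2 * E + 1 + 5 * q ≤ (2 * E + 12 + 12 * E * q) * (1 - 2 * q) := by
    nlinarith [mul_nonneg hE (ha.trans haq)]
  rw [div_le_iff₀ (by linarith)]
  calc _ ≤ 2 * E + 1 + 5 * q := hnum
    _ ≤ (2 * E + 12 + 12 * E * q) * (1 - 2 * q) := hbound
    _ ≤ _ := mul_le_mul_of_nonneg_left hden (by nlinarith [mul_nonneg hE (ha.trans haq)])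

theorem stmt_8 :
    ∃ c₀ > (0 : ℝ), ∃ C > (0 : ℝ),
      ∀ x y z : ℝ, 0 < x → 0 < y → 0 < z →
        min x y > c₀ → x + y ≤ z →
        |F₁ x y z - (z - x - y) - 2 * Real.log 2|
          ≤ C * (Real.exp (-(z - x - y)) + Real.exp (-2 * min x y)) := by
  refine ⟨1, one_pos, 6, by norm_num, fun x y z hx hy hz hm hxyz => ?_⟩
  set E := exp (z - x - y)
  set q := exp (-2 * min x y)
  have hE : 1 ≤ E := one_le_exp (by linarith)
  have hq : q ≤ 1 / 3 := by
    have : 3 ≤ exp 2 := by linarith [add_one_le_exp 2]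
    calc q ≤ exp (-2) := exp_le_exp.2 (by linarith)
      _ = (exp 2)⁻¹ := exp_neg 2
      _ ≤ 1 / 3 := by rw [one_div]; exact inv_anti₀ (by norm_num) this
  have hxq : exp (-2 * x) ≤ q := exp_le_exp.2 (by linarith [min_le_left x y])
  have hyq : exp (-2 * y) ≤ q := exp_le_exp.2 (by linarith [min_le_right x y])
  have hzq : exp (-(z + x + y)) ≤ q := exp_le_exp.2 (by linarith [min_le_left x y])
  rw [F₁, cosh_add_cosh_mul_cosh_div_sinh_mul_sinh]
  set W := (2 * E + 2 * exp (-(z + x + y)) + (1 + exp (-2 * x)) * (1 + exp (-2 * y))) /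
    ((1 - exp (-2 * x)) * (1 - exp (-2 * y)))
  have hW_ge : 2 * E + 1 ≤ W := two_mul_add_one_le_div (by linarith) (exp_pos _).le
    (exp_pos _).le (exp_lt_one_iff.2 (by linarith)) (exp_pos _).le (exp_lt_one_iff.2 (by linarith))
  have hW_le : W ≤ 2 * E + 12 + 12 * E * q :=
    div_le_two_mul_add_of_le (by linarith) hzq (exp_pos _).le hxq (exp_pos _).le hyq hq
  have hlog : log (4 * E) = z - x - y + 2 * log 2 := by
    rw [log_mul (by norm_num) (exp_pos _).ne', log_exp,
      show (4 : ℝ) = 2 ^ 2 by norm_num, log_pow]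
    push_cast; ring
  have h_lower : log (4 * E) ≤ arccosh W := log_four_mul_le_arccosh (exp_pos _) hW_ge
  have h_upper : arccosh W ≤ log (4 * E) + 6 * (exp (-(z - x - y)) + q) := by
    refine (arccosh_le_log_two_mul (by linarith)).trans
      (log_le_log_add_of_le_mul_one_add (by positivity) (by linarith) ?_)
    rw [exp_neg]
    calc 2 * W ≤ 4 * E + 24 + 24 * E * q := by linarith
      _ = 4 * E * (1 + 6 * (E⁻¹ + q)) := by field_simp; ring
  rw [abs_le]
  constructor <;> linarith [exp_pos (-(z - x - y)), exp_pos (-2 * min x y)]
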